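/- arXiv:2111.02744 — 3 statements merged into one kernel-verified Lean document; each statement's English description precedes it below -/
import Mathlib

section
/- For all real numbers a, b > 0, the improper integral ∫₀^∞ √r / ((r+a)(r+b)) dr equals π / (√a + √b). -/
/-!
Writing `a = α ^ 2`, `b = β ^ 2`, the integrand has an explicit antiderivative vanishing at `0`:
partial fractions give `2 (α arctan (√r / α) - β arctan (√r / β)) / (α ^ 2 - β ^ 2)` when
`α ≠ β`, and `arctan (√r / α) / α - √r / (r + α ^ 2)` when `α = β`. Its limit at `∞` is
`π / (α + β)`, and since the integrand is nonnegative this limit is the Lebesgue integral.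
-/

open MeasureTheory Real Filter Set Topology

lemma hasDerivAt_arctan_sqrt_div {α r : ℝ} (hα : 0 < α) (hr : 0 < r) :
    HasDerivAt (fun x ↦ arctan (√x / α)) (α / (2 * √r * (r + α ^ 2))) r := by
  refine ((hasDerivAt_sqrt hr.ne').div_const α).arctan.congr_deriv ?_
  have hsr : 0 < √r := sqrt_pos.2 hr
  field_simp
  rw [sq_sqrt hr.le]
  ring

lemma tendsto_arctan_sqrt_div_atTop {α : ℝ} (hα : 0 < α) :
    Tendsto (fun x ↦ arctan (√x / α)) atTop (𝓝 (π / 2)) :=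
  tendsto_nhds_of_tendsto_nhdsWithin tendsto_arctan_atTop |>.comp <|
    tendsto_sqrt_atTop.atTop_div_const hα

lemma tendsto_sqrt_div_add_atTop {a : ℝ} (ha : 0 ≤ a) :
    Tendsto (fun r ↦ √r / (r + a)) atTop (𝓝 0) := by
  refine tendsto_of_tendsto_of_tendsto_of_le_of_le' tendsto_const_nhds
    (tendsto_inv_atTop_zero.comp tendsto_sqrt_atTop) ?_ ?_
  all_goals filter_upwards [eventually_gt_atTop 0] with r hr
  · positivity
  · have hsr : 0 < √r := sqrt_pos.2 hr
    rw [Function.comp_apply, div_le_iff₀ (by positivity), inv_mul_eq_div, le_div_iff₀ hsr,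
      mul_self_sqrt hr.le]
    linarith

lemma sqrt_div_mul_nonneg {a b : ℝ} (ha : 0 ≤ a) (hb : 0 ≤ b) :
    ∀ r ∈ Ioi (0 : ℝ), 0 ≤ √r / ((r + a) * (r + b)) := by
  intro r (hr : 0 < r)
  positivity

lemma integral_sqrt_div_add_sq_mul_self {α : ℝ} (hα : 0 < α) :
    ∫ r in Ioi (0 : ℝ), √r / ((r + α ^ 2) * (r + α ^ 2)) = π / (α + α) := by
  set G : ℝ → ℝ := fun r ↦ arctan (√r / α) / α - √r / (r + α ^ 2)
  have hG' : ∀ r ∈ Ioi (0 : ℝ), HasDerivAt G (√r / ((r + α ^ 2) * (r + α ^ 2))) r := by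
    intro r (hr : 0 < r)
    have hsr : 0 < √r := sqrt_pos.2 hr
    refine (((hasDerivAt_arctan_sqrt_div hα hr).div_const α).sub
      ((hasDerivAt_sqrt hr.ne').div ((hasDerivAt_id' r).add_const _) (by positivity))).congr_deriv
        ?_
    field_simp
    rw [sq_sqrt hr.le]
    ring
  have hG : Tendsto G atTop (𝓝 (π / 2 / α - 0)) :=
    ((tendsto_arctan_sqrt_div_atTop hα).div_const α).sub
      (tendsto_sqrt_div_add_atTop (by positivity))
  have hG0 : ContinuousWithinAt G (Ici 0) 0 :=
    (show ContinuousAt G 0 by fun_prop (disch := positivity)).continuousWithinAt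
  rw [integral_Ioi_of_hasDerivAt_of_nonneg hG0 hG'
    (sqrt_div_mul_nonneg (by positivity) (by positivity)) hG]
  simp only [sub_zero, sqrt_zero, zero_div, arctan_zero, zero_add, sub_self, G]
  field_simp
  ring

lemma integral_sqrt_div_add_sq_mul_add_sq_of_ne {α β : ℝ} (hα : 0 < α) (hβ : 0 < β)
    (hαβ : α ≠ β) :
    ∫ r in Ioi (0 : ℝ), √r / ((r + α ^ 2) * (r + β ^ 2)) = π / (α + β) := by
  have hαβ' : α ^ 2 - β ^ 2 ≠ 0 :=
    sub_ne_zero.2 fun h ↦ hαβ <| (pow_left_inj₀ hα.le hβ.le two_ne_zero).1 h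
  set G : ℝ → ℝ := fun r ↦ (α * arctan (√r / α) - β * arctan (√r / β)) * 2 / (α ^ 2 - β ^ 2)
  have hG' : ∀ r ∈ Ioi (0 : ℝ), HasDerivAt G (√r / ((r + α ^ 2) * (r + β ^ 2))) r := by
    intro r (hr : 0 < r)
    have hsr : 0 < √r := sqrt_pos.2 hr
    refine ((((hasDerivAt_arctan_sqrt_div hα hr).const_mul α).sub
      ((hasDerivAt_arctan_sqrt_div hβ hr).const_mul β)).mul_const 2 |>.div_const _).congr_deriv ?_
    field_simp
    rw [sq_sqrt hr.le]
    ring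
  have hG : Tendsto G atTop (𝓝 ((α * (π / 2) - β * (π / 2)) * 2 / (α ^ 2 - β ^ 2))) :=
    ((((tendsto_arctan_sqrt_div_atTop hα).const_mul α).sub
      ((tendsto_arctan_sqrt_div_atTop hβ).const_mul β)).mul_const 2).div_const _
  have hG0 : ContinuousWithinAt G (Ici 0) 0 :=
    (show ContinuousAt G 0 by fun_prop (disch := positivity)).continuousWithinAt
  rw [integral_Ioi_of_hasDerivAt_of_nonneg hG0 hG'
    (sqrt_div_mul_nonneg (by positivity) (by positivity)) hG]
  simp only [sqrt_zero, zero_div, arctan_zero, mul_zero, sub_self, zero_mul, sub_zero, G]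
  field_simp
  ring

lemma integral_sqrt_div_add_sq_mul_add_sq {α β : ℝ} (hα : 0 < α) (hβ : 0 < β) :
    ∫ r in Ioi (0 : ℝ), √r / ((r + α ^ 2) * (r + β ^ 2)) = π / (α + β) := by
  rcases eq_or_ne α β with rfl | hαβ
  · exact integral_sqrt_div_add_sq_mul_self hα
  · exact integral_sqrt_div_add_sq_mul_add_sq_of_ne hα hβ hαβ

/-- For all `a, b > 0`, `∫₀^∞ √r / ((r+a)(r+b)) dr = π / (√a + √b)`. -/
theorem stmt_0 (a b : ℝ) (ha : 0 < a) (hb : 0 < b) :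
    ∫ r in Set.Ioi (0 : ℝ), Real.sqrt r / ((r + a) * (r + b)) =
      Real.pi / (Real.sqrt a + Real.sqrt b) := by
  have h := integral_sqrt_div_add_sq_mul_add_sq (sqrt_pos.2 ha) (sqrt_pos.2 hb)
  rwa [sq_sqrt ha.le, sq_sqrt hb.le] at h
end

section
/- Let X be a Banach space and W : D(W) ⊆ X → X a closed linear operator such that the sector S_φ = {z ∈ ℂ \ {0} : |arg z| ≤ φ} ∪ {0} is contained in ρ(−W) with ‖(W + λ)⁻¹‖ ≤ C/(1 + |λ|) for λ ∈ S_φ. Then for every λ ∈ S_φ and every θ ∈ (0, min{φ, π − φ}), the operator W + λI is of type θ: for all ν ∈ S_θ, W + λI + νI is invertible with ‖(W + λI + ν I)⁻¹‖ ≤ C_θ/(|λ| + |ν| + 1), where C_θ = C / cos((φ + θ)/2). -/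
/-- The closed sector `S_φ = {z ≠ 0 : |arg z| ≤ φ} ∪ {0}`. -/
def Sector (φ : ℝ) : Set ℂ := {z : ℂ | z = 0 ∨ |Complex.arg z| ≤ φ}

/-- `R` is the (bounded, everywhere defined) inverse of `W + μ I`, where `W` is an
unbounded operator with domain `Dom`. -/
def IsResolvent {X : Type*} [NormedAddCommGroup X] [NormedSpace ℂ X]
    (Dom : Submodule ℂ X) (W : Dom →ₗ[ℂ] X) (μ : ℂ) (R : X →L[ℂ] X) : Prop :=
  ∃ hmem : ∀ x : X, R x ∈ Dom,
    (∀ x : X, W ⟨R x, hmem x⟩ + μ • R x = x) ∧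
    (∀ y : Dom, R (W y + μ • (y : X)) = (y : X))

/-!
Rotating by `exp (-i (α + β) / 2)`, where `α = arg λ` and `β = arg ν`, puts `λ` and `ν`
symmetrically about the positive real axis at angle `±(α - β) / 2`; the real part of the rotated
sum is then `(|λ| + |ν|) cos ((α - β) / 2)`. Since `|α - β| ≤ φ + θ < π`, this gives
`|λ + ν| ≥ cos ((φ + θ) / 2) (|λ| + |ν|)`, and it also shows that `arg (λ + ν)` lies between
`α` and `β`, so `λ + ν ∈ S_φ`. The resolvent bound at `λ + ν` then yields the claim.
-/

open Real

lemma mem_uIcc_of_abs_sub_midpoint_le {a b x : ℝ} (h : |x - (a + b) / 2| ≤ |a - b| / 2) :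
    x ∈ Set.uIcc a b := by
  rw [Set.mem_uIcc]
  grind

namespace Complex

lemma re_exp_mul_I_mul (γ : ℝ) (z : ℂ) :
    (exp (γ * I) * z).re = ‖z‖ * Real.cos (arg z + γ) := by
  conv_lhs => rw [← norm_mul_exp_arg_mul_I z]
  rw [mul_left_comm, ← exp_add, ← add_mul, ← ofReal_add, add_comm γ, re_ofReal_mul,
    exp_ofReal_mul_I_re]

lemma arg_exp_mul_I_mul {γ : ℝ} {u : ℂ} (hu : u ≠ 0) (h : γ + arg u ∈ Set.Ioc (-π) π) :
    arg (exp (γ * I) * u) = γ + arg u := by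
  conv_lhs => rw [← norm_mul_exp_arg_mul_I u]
  rw [mul_left_comm, ← exp_add, ← add_mul, ← ofReal_add, arg_real_mul _ (norm_pos_iff.mpr hu),
    arg_exp_mul_I, toIocMod_eq_self]
  simpa [two_mul, ← sub_eq_add_neg] using h

lemma abs_arg_le_of_norm_mul_cos_le_re {u : ℂ} {ψ : ℝ} (hψ₀ : 0 ≤ ψ) (hψπ : ψ ≤ π)
    (hu : u ≠ 0) (h : ‖u‖ * Real.cos ψ ≤ u.re) : |arg u| ≤ ψ := by
  have hcos : Real.cos ψ ≤ Real.cos |arg u| := by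
    rwa [Real.cos_abs, cos_arg hu, le_div_iff₀' (norm_pos_iff.mpr hu)]
  exact Real.strictAntiOn_cos.le_iff_ge ⟨hψ₀, hψπ⟩ ⟨abs_nonneg _, abs_arg_le_pi u⟩ |>.mp hcos

lemma re_exp_neg_half_arg_add_mul_add (z w : ℂ) :
    (exp (((-((arg z + arg w) / 2) : ℝ) : ℂ) * I) * (z + w)).re
      = (‖z‖ + ‖w‖) * Real.cos ((arg z - arg w) / 2) := by
  rw [mul_add, add_re, re_exp_mul_I_mul, re_exp_mul_I_mul,
    show arg w + -((arg z + arg w) / 2) = -((arg z - arg w) / 2) by ring, Real.cos_neg]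
  ring_nf

lemma mul_cos_half_arg_sub_le_norm_add (z w : ℂ) :
    (‖z‖ + ‖w‖) * Real.cos ((arg z - arg w) / 2) ≤ ‖z + w‖ := by
  rw [← re_exp_neg_half_arg_add_mul_add]
  refine (re_le_norm _).trans_eq ?_
  rw [norm_mul, norm_exp_ofReal_mul_I, one_mul]

lemma abs_arg_exp_neg_half_arg_add_mul_add_le {z w : ℂ} (h : |arg z - arg w| ≤ π) :
    |arg (exp (((-((arg z + arg w) / 2) : ℝ) : ℂ) * I) * (z + w))| ≤ |arg z - arg w| / 2 := by
  set u := exp (((-((arg z + arg w) / 2) : ℝ) : ℂ) * I) * (z + w)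
  rcases eq_or_ne u 0 with hu | hu
  · simp only [hu, arg_zero, abs_zero]
    positivity
  refine abs_arg_le_of_norm_mul_cos_le_re (by positivity)
    (by linarith [abs_nonneg (arg z - arg w)]) hu ?_
  have hcos : 0 ≤ Real.cos ((arg z - arg w) / 2) := Real.cos_nonneg_of_mem_Icc <| by
    obtain ⟨h₁, h₂⟩ := abs_le.mp h
    constructor <;> linarith
  rw [← abs_two, ← abs_div, Real.cos_abs, re_exp_neg_half_arg_add_mul_add, norm_mul,
    norm_exp_ofReal_mul_I, one_mul]
  exact mul_le_mul_of_nonneg_right (norm_add_le z w) hcos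

lemma arg_add_mem_uIcc {z w : ℂ} (h : |arg z - arg w| < π) :
    arg (z + w) ∈ Set.uIcc (arg z) (arg w) := by
  rcases eq_or_ne z 0 with rfl | hz
  · simp
  obtain ⟨hlt, hgt⟩ := abs_lt.mp h
  set γ := (arg z + arg w) / 2
  set u := exp (((-γ : ℝ) : ℂ) * I) * (z + w)
  have hcos : 0 < Real.cos ((arg z - arg w) / 2) :=
    Real.cos_pos_of_mem_Ioo ⟨by linarith, by linarith⟩
  have hnorm : 0 < ‖z‖ + ‖w‖ := add_pos_of_pos_of_nonneg (norm_pos_iff.mpr hz) (norm_nonneg w)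
  have hzw : z + w ≠ 0 :=
    norm_pos_iff.mp ((mul_pos hnorm hcos).trans_le (mul_cos_half_arg_sub_le_norm_add z w))
  have hu : u ≠ 0 := mul_ne_zero (exp_ne_zero _) hzw
  have hbetween : γ + arg u ∈ Set.uIcc (arg z) (arg w) :=
    mem_uIcc_of_abs_sub_midpoint_le <| by
      rw [add_sub_cancel_left]
      exact abs_arg_exp_neg_half_arg_add_mul_add_le h.le
  have hIoc : γ + arg u ∈ Set.Ioc (-π) π :=
    ⟨(lt_min (neg_pi_lt_arg z) (neg_pi_lt_arg w)).trans_le hbetween.1,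
      hbetween.2.trans (max_le (arg_le_pi z) (arg_le_pi w))⟩
  have hzw_eq : z + w = exp (γ * I) * u := by
    rw [← mul_assoc, ← exp_add, ← add_mul, ← ofReal_add, add_neg_cancel,
      ofReal_zero, zero_mul, exp_zero, one_mul]
  rw [hzw_eq, arg_exp_mul_I_mul hu hIoc]
  exact hbetween

lemma mul_cos_le_norm_add {z w : ℂ} {ψ : ℝ} (hψ : ψ ≤ π) (h : |arg z - arg w| ≤ 2 * ψ) :
    (‖z‖ + ‖w‖) * Real.cos ψ ≤ ‖z + w‖ := by
  refine le_trans ?_ (mul_cos_half_arg_sub_le_norm_add z w)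
  rw [← Real.cos_abs ((arg z - arg w) / 2), abs_div, abs_two]
  gcongr
  exact Real.cos_le_cos_of_nonneg_of_le_pi (by positivity) hψ (by linarith)

end Complex

open Complex

lemma abs_arg_le_of_mem_sector {φ : ℝ} {z : ℂ} (hφ : 0 ≤ φ) (hz : z ∈ Sector φ) :
    |arg z| ≤ φ := by
  rcases hz with rfl | hz
  · simpa using hφ
  · exact hz

lemma add_mem_sector {φ θ : ℝ} {z w : ℂ} (hθ : 0 ≤ θ) (hθφ : θ ≤ φ) (hπ : φ + θ < π)
    (hz : z ∈ Sector φ) (hw : w ∈ Sector θ) : z + w ∈ Sector φ := by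
  obtain ⟨hz₁, hz₂⟩ := abs_le.mp (abs_arg_le_of_mem_sector (hθ.trans hθφ) hz)
  obtain ⟨hw₁, hw₂⟩ := abs_le.mp (abs_arg_le_of_mem_sector hθ hw)
  refine Or.inr <| abs_le.mpr <| Set.uIcc_subset_Icc ⟨hz₁, hz₂⟩ ⟨by linarith, by linarith⟩ <|
    arg_add_mem_uIcc ?_
  exact abs_sub_lt_iff.mpr ⟨by linarith, by linarith⟩

theorem stmt_6_general {X : Type*} [NormedAddCommGroup X] [NormedSpace ℂ X]
    (Dom : Submodule ℂ X) (W : Dom →ₗ[ℂ] X)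
    (φ C : ℝ) (hC : 0 < C)
    (hres : ∀ l ∈ Sector φ, ∃ R : X →L[ℂ] X,
      IsResolvent Dom W l R ∧ ‖R‖ ≤ C / (1 + ‖l‖)) :
    ∀ l ∈ Sector φ, ∀ θ ∈ Set.Ioo 0 (min φ (Real.pi - φ)), ∀ ν ∈ Sector θ,
      ∃ R : X →L[ℂ] X, IsResolvent Dom W (l + ν) R ∧
        ‖R‖ ≤ (C / Real.cos ((φ + θ) / 2)) / (‖l‖ + ‖ν‖ + 1) := by
  rintro l hl θ ⟨hθ₀, hθ⟩ ν hν
  have hθφ : θ < φ := hθ.trans_le (min_le_left _ _)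
  have hθπ : θ < π - φ := hθ.trans_le (min_le_right _ _)
  obtain ⟨R, hR, hRC⟩ := hres _ (add_mem_sector hθ₀.le hθφ.le (by linarith) hl hν)
  have hc : 0 < Real.cos ((φ + θ) / 2) := Real.cos_pos_of_mem_Ioo ⟨by linarith, by linarith⟩
  have hnorm : (‖l‖ + ‖ν‖) * Real.cos ((φ + θ) / 2) ≤ ‖l + ν‖ := by
    have hl' := abs_le.mp (abs_arg_le_of_mem_sector (by linarith) hl)
    have hν' := abs_le.mp (abs_arg_le_of_mem_sector hθ₀.le hν)
    exact mul_cos_le_norm_add (by linarith) (abs_sub_le_iff.mpr ⟨by linarith, by linarith⟩)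
  refine ⟨R, hR, hRC.trans ?_⟩
  rw [div_div, div_le_div_iff₀ (by positivity) (by positivity)]
  gcongr
  linarith [Real.cos_le_one ((φ + θ) / 2)]

/-- If `W` is a closed operator of type `φ` with bound `C` (i.e. `S_φ ⊆ ρ(−W)` with
`‖(W+λ)⁻¹‖ ≤ C/(1+|λ|)`), then for `λ ∈ S_φ` and `θ ∈ (0, min{φ, π−φ})`, the operator
`W + λI` is of type `θ` with bound `C_θ = C / cos((φ+θ)/2)`:
for all `ν ∈ S_θ`, `‖(W + λI + νI)⁻¹‖ ≤ C_θ/(|λ| + |ν| + 1)`. -/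
theorem stmt_6 {X : Type*} [NormedAddCommGroup X] [NormedSpace ℂ X] [CompleteSpace X]
    (Dom : Submodule ℂ X) (W : Dom →ₗ[ℂ] X)
    (hclosed : IsClosed {q : X × X | ∃ h : q.1 ∈ Dom, W ⟨q.1, h⟩ = q.2})
    (φ C : ℝ) (hφ : φ ∈ Set.Ioo 0 Real.pi) (hC : 0 < C)
    (hres : ∀ l ∈ Sector φ, ∃ R : X →L[ℂ] X,
      IsResolvent Dom W l R ∧ ‖R‖ ≤ C / (1 + ‖l‖)) :
    ∀ l ∈ Sector φ, ∀ θ ∈ Set.Ioo 0 (min φ (Real.pi - φ)), ∀ ν ∈ Sector θ,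
      ∃ R : X →L[ℂ] X, IsResolvent Dom W (l + ν) R ∧
        ‖R‖ ≤ (C / Real.cos ((φ + θ) / 2)) / (‖l‖ + ‖ν‖ + 1) :=
  stmt_6_general Dom W φ C hC hres
end

section
/- Let φ₂, φ₃ ∈ (0, π) with φ₂ + φ₃ < π. For all λ ∈ S_{φ₂} and μ ∈ S_{φ₃}, one has |λ + μ| ≥ cos((φ₂+φ₃)/2) · (|λ| + |μ|). Consequently, if |λ| ≥ r₀/cos²((φ₂+φ₃)/2) then |λ| ≥ r₀ and |λ + μ|²/|λ| ≥ r₀. -/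
/-!
Write `c = cos (θ / 2)` with `θ = φ₂ + φ₃`. The angle between `λ` and `μ` is at most
`|arg λ| + |arg μ| ≤ θ ≤ π`, so `⟪λ, μ⟫ ≥ |λ| |μ| cos θ = |λ| |μ| (2c² - 1)`, and then
`|λ + μ|² ≥ c² (|λ| + |μ|)² + (1 - c²) (|λ| - |μ|)² ≥ c² (|λ| + |μ|)²`.
The consequences follow from `c² ≤ 1` and `|λ + μ| ≥ c |λ|`.
-/

open Complex

open InnerProductGeometry RealInnerProductSpace

section InnerProductSpace

variable {V : Type*} [NormedAddCommGroup V] [InnerProductSpace ℝ V]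

theorem cos_mul_norm_mul_norm_le_inner {x y : V} {θ : ℝ} (hθ : θ ≤ Real.pi)
    (hxy : angle x y ≤ θ) : Real.cos θ * (‖x‖ * ‖y‖) ≤ ⟪x, y⟫ := by
  rw [← cos_angle_mul_norm_mul_norm]
  gcongr
  exact Real.cos_le_cos_of_nonneg_of_le_pi (angle_nonneg x y) hθ hxy

theorem cos_half_mul_add_norm_le_norm_add {x y : V} {θ : ℝ}
    (hxy : Real.cos θ * (‖x‖ * ‖y‖) ≤ ⟪x, y⟫) :
    Real.cos (θ / 2) * (‖x‖ + ‖y‖) ≤ ‖x + y‖ := by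
  set c := Real.cos (θ / 2)
  have hcos : Real.cos θ = 2 * c ^ 2 - 1 := by
    rw [← Real.cos_two_mul, mul_div_cancel₀ θ two_ne_zero]
  have hc1 : c ^ 2 ≤ 1 := Real.cos_sq_le_one _
  have hsq : (c * (‖x‖ + ‖y‖)) ^ 2 ≤ ‖x + y‖ ^ 2 :=
    calc (c * (‖x‖ + ‖y‖)) ^ 2
        ≤ (c * (‖x‖ + ‖y‖)) ^ 2 + (1 - c ^ 2) * (‖x‖ - ‖y‖) ^ 2 :=
          le_add_of_nonneg_right (mul_nonneg (sub_nonneg.2 hc1) (sq_nonneg _))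
      _ = ‖x‖ ^ 2 + 2 * (Real.cos θ * (‖x‖ * ‖y‖)) + ‖y‖ ^ 2 := by rw [hcos]; ring
      _ ≤ ‖x‖ ^ 2 + 2 * ⟪x, y⟫ + ‖y‖ ^ 2 := by gcongr
      _ = ‖x + y‖ ^ 2 := (norm_add_sq_real x y).symm
  exact (abs_le_of_sq_le_sq' hsq (norm_nonneg _)).2

end InnerProductSpace

theorem angle_le_of_mem_sector {α β : ℝ} {z w : ℂ} (hz : z ∈ Sector α) (hw : w ∈ Sector β)
    (hz₀ : z ≠ 0) (hw₀ : w ≠ 0) : angle z w ≤ α + β := by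
  have hz' : |z.arg| ≤ α := hz.resolve_left hz₀
  have hw' : |w.arg| ≤ β := hw.resolve_left hw₀
  calc angle z w ≤ angle z 1 + angle 1 w := angle_le_angle_add_angle z 1 w
    _ = |z.arg| + |w.arg| := by rw [angle_one_right hz₀, angle_one_left hw₀]
    _ ≤ α + β := add_le_add hz' hw'

theorem cos_mul_norm_mul_norm_le_inner_of_mem_sector {α β : ℝ} (hαβ : α + β ≤ Real.pi)
    {z w : ℂ} (hz : z ∈ Sector α) (hw : w ∈ Sector β) :
    Real.cos (α + β) * (‖z‖ * ‖w‖) ≤ ⟪z, w⟫ := by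
  rcases eq_or_ne z 0 with rfl | hz₀
  · simp
  rcases eq_or_ne w 0 with rfl | hw₀
  · simp
  exact cos_mul_norm_mul_norm_le_inner hαβ (angle_le_of_mem_sector hz hw hz₀ hw₀)

/-- For `λ ∈ S_{φ₂}`, `μ ∈ S_{φ₃}` with `φ₂ + φ₃ < π`:
`|λ + μ| ≥ cos((φ₂+φ₃)/2)(|λ| + |μ|)`; consequently if
`|λ| ≥ r₀/cos²((φ₂+φ₃)/2)` then `|λ| ≥ r₀` and `|λ+μ|²/|λ| ≥ r₀`. -/
theorem stmt_10 (φ₂ φ₃ : ℝ) (hφ₂ : φ₂ ∈ Set.Ioo 0 Real.pi) (hφ₃ : φ₃ ∈ Set.Ioo 0 Real.pi)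
    (hsum : φ₂ + φ₃ < Real.pi) (r₀ : ℝ) (hr₀ : 0 < r₀)
    (l m : ℂ) (hl : l ∈ Sector φ₂) (hm : m ∈ Sector φ₃) :
    Real.cos ((φ₂ + φ₃) / 2) * (‖l‖ + ‖m‖) ≤ ‖l + m‖ ∧
    (r₀ / Real.cos ((φ₂ + φ₃) / 2) ^ 2 ≤ ‖l‖ →
      r₀ ≤ ‖l‖ ∧ r₀ ≤ ‖l + m‖ ^ 2 / ‖l‖) := by
  have hsector : Real.cos ((φ₂ + φ₃) / 2) * (‖l‖ + ‖m‖) ≤ ‖l + m‖ :=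
    cos_half_mul_add_norm_le_norm_add
      (cos_mul_norm_mul_norm_le_inner_of_mem_sector hsum.le hl hm)
  refine ⟨hsector, fun hr => ?_⟩
  set c := Real.cos ((φ₂ + φ₃) / 2)
  have hc : 0 < c :=
    Real.cos_pos_of_mem_Ioo ⟨by linarith [hφ₂.1, hφ₃.1, Real.pi_pos], by linarith⟩
  have hc1 : c ^ 2 ≤ 1 := Real.cos_sq_le_one _
  have hr' : r₀ ≤ c ^ 2 * ‖l‖ := by rwa [div_le_iff₀' (by positivity)] at hr
  have hl₀ : r₀ ≤ ‖l‖ := hr'.trans (mul_le_of_le_one_left (norm_nonneg _) hc1)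
  have hcl : c * ‖l‖ ≤ ‖l + m‖ :=
    (mul_le_mul_of_nonneg_left (le_add_of_nonneg_right (norm_nonneg m)) hc.le).trans hsector
  refine ⟨hl₀, ?_⟩
  rw [le_div_iff₀ (hr₀.trans_le hl₀)]
  calc r₀ * ‖l‖ ≤ c ^ 2 * ‖l‖ * ‖l‖ := by gcongr
    _ = (c * ‖l‖) ^ 2 := by ring
    _ ≤ ‖l + m‖ ^ 2 := by gcongr
end
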